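/- arXiv:2305.16733 — 2 statements merged into one kernel-verified Lean document; each statement's English description precedes it below -/
import Mathlib

section
/- Fix p ∈ [1,∞) and M > 2^{1/p}. Let λ : (0,∞)² → [0,∞) be continuous with homogeneity λ(ax,ay) = a⁻¹λ(x,y) for a > 0, and let y_p(x) = (1 + 1/(xᵖ − 1))^{1/p}. Then ∫_M^∞ λ(x, y_p(x)) dx ≤ ∫_{(Mᵖ−1)^{1/p}}^∞ λ(u,1) du. -/
open MeasureTheory Set

/-- `∫_M^∞ λ(x, y_p(x)) dx ≤ ∫_{(M^p−1)^{1/p}}^∞ λ(u,1) du` for `M > 2^{1/p}`. -/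
theorem stmt8 (p M : ℝ) (hp : 1 ≤ p) (hM : 2 ^ (1 / p) < M)
    (l : ℝ × ℝ → ℝ)
    (hl_cont : ContinuousOn l (Ioi (0:ℝ) ×ˢ Ioi (0:ℝ)))
    (hl_nonneg : ∀ z : ℝ × ℝ, 0 ≤ l z)
    (hl_hom : ∀ a : ℝ, 0 < a → ∀ x y : ℝ, 0 < x → 0 < y →
      l (a * x, a * y) = a⁻¹ * l (x, y))
    (yp : ℝ → ℝ)
    (hyp : ∀ x : ℝ, 1 < x → yp x = (1 + 1 / (x ^ p - 1)) ^ (1 / p)) :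
    ∫ x in Ioi M, l (x, yp x) ≤ ∫ u in Ioi ((M ^ p - 1) ^ (1 / p)), l (u, 1) := by
  have hp0 : (0:ℝ) < p := lt_of_lt_of_le one_pos hp
  have hp0' : p ≠ 0 := ne_of_gt hp0
  have h2 : (1:ℝ) ≤ 2 ^ (1/p) := Real.one_le_rpow one_le_two (by positivity)
  have hM1 : (1:ℝ) < M := lt_of_le_of_lt h2 hM
  have hM0 : (0:ℝ) < M := one_pos.trans hM1
  have h2p : ((2:ℝ) ^ (1/p)) ^ p = 2 := by
    rw [one_div]; exact Real.rpow_inv_rpow (by norm_num) hp0'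
  have hMp2 : (2:ℝ) < M ^ p := by
    have := Real.rpow_lt_rpow (by positivity) hM hp0
    rwa [h2p] at this
  set c : ℝ := (M ^ p - 1) ^ (1/p) with hc
  set g : ℝ → ℝ := fun x => (x ^ p - 1) ^ (1/p) with hgdef
  set D : ℝ → ℝ := fun x => (p * x ^ (p-1)) * ((1/p) * (x ^ p - 1) ^ (1/p - 1)) with hDdef
  -- basic facts for x > M
  have hx0 : ∀ x ∈ Ioi M, (0:ℝ) < x := fun x hx => hM0.trans hx
  have hxp : ∀ x ∈ Ioi M, M ^ p < x ^ p := fun x hx =>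
    Real.rpow_lt_rpow hM0.le hx hp0
  have ht1 : ∀ x ∈ Ioi M, (1:ℝ) < x ^ p - 1 := fun x hx => by
    have := hxp x hx; linarith
  have ht0 : ∀ x ∈ Ioi M, (0:ℝ) < x ^ p - 1 := fun x hx => one_pos.trans (ht1 x hx)
  have hg0 : ∀ x ∈ Ioi M, (0:ℝ) < g x := fun x hx =>
    Real.rpow_pos_of_pos (ht0 x hx) _
  have hD0 : ∀ x ∈ Ioi M, (0:ℝ) < D x := fun x hx => by
    have h1 := hx0 x hx; have h2 := ht0 x hx
    have := Real.rpow_pos_of_pos h1 (p-1)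
    have := Real.rpow_pos_of_pos h2 (1/p - 1)
    simp only [hDdef]; positivity
  -- yp x = x / g x
  have hyp_eq : ∀ x ∈ Ioi M, yp x = x / g x := by
    intro x hx
    have hx1 : (1:ℝ) < x := hM1.trans hx
    have h1 := ht0 x hx
    have e1 : 1 + 1 / (x ^ p - 1) = x ^ p / (x ^ p - 1) := by field_simp; ring
    rw [hyp x hx1, e1, Real.div_rpow (by positivity) h1.le, one_div,
      Real.rpow_rpow_inv (hx0 x hx).le hp0']
    rw [hgdef, one_div]
  have hy0 : ∀ x ∈ Ioi M, (0:ℝ) < yp x := fun x hx => by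
    rw [hyp_eq x hx]; exact div_pos (hx0 x hx) (hg0 x hx)
  have hmul : ∀ x ∈ Ioi M, yp x * g x = x := fun x hx => by
    rw [hyp_eq x hx]; exact div_mul_cancel₀ x (hg0 x hx).ne'
  have hypp : ∀ x ∈ Ioi M, yp x ^ p = 1 + 1 / (x ^ p - 1) := fun x hx => by
    have h1 := ht0 x hx
    rw [hyp x (hM1.trans hx), one_div p, Real.rpow_inv_rpow (by positivity) hp0']
  -- key identity: l (x, yp x) = (yp x)⁻¹ * l (g x, 1)
  have key1 : ∀ x ∈ Ioi M, l (x, yp x) = (yp x)⁻¹ * l (g x, 1) := fun x hx => by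
    have := hl_hom (yp x) (hy0 x hx) (g x) 1 (hg0 x hx) one_pos
    rwa [mul_one, hmul x hx] at this
  -- D x * yp x = yp x ^ p
  have keyD : ∀ x ∈ Ioi M, D x * yp x = yp x ^ p := fun x hx => by
    have hx0' := hx0 x hx
    have ht0' := ht0 x hx
    have hg0' := hg0 x hx
    have hxs : x ^ (p - 1) = x ^ p / x := Real.rpow_sub_one hx0'.ne' _
    have hts : (x ^ p - 1) ^ (1/p - 1) = (x ^ p - 1) ^ (1/p) / (x ^ p - 1) :=
      Real.rpow_sub_one ht0'.ne' _
    rw [hypp x hx, hDdef]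
    simp only
    rw [hxs, hts, hyp_eq x hx, hgdef]
    simp only
    field_simp
    ring
  -- h x := |D x| * l (g x, 1) equals yp x ^ p * l (x, yp x)
  have keyh : ∀ x ∈ Ioi M, |D x| * l (g x, 1) = yp x ^ p * l (x, yp x) := fun x hx => by
    have hy0' := hy0 x hx
    rw [abs_of_pos (hD0 x hx), key1 x hx, ← keyD x hx]
    field_simp
  have hypp_lb : ∀ x ∈ Ioi M, (1:ℝ) ≤ yp x ^ p := fun x hx => by
    rw [hypp x hx]
    have := ht0 x hx
    have : 0 < 1 / (x ^ p - 1) := by positivity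
    linarith
  have hypp_ub : ∀ x ∈ Ioi M, yp x ^ p ≤ 2 := fun x hx => by
    rw [hypp x hx]
    have h1 := ht1 x hx
    have : 1 / (x ^ p - 1) ≤ 1 := by
      rw [div_le_one (by linarith)]; linarith
    linarith
  have keyA : ∀ x ∈ Ioi M, l (x, yp x) ≤ |D x| * l (g x, 1) := fun x hx => by
    rw [keyh x hx]
    nlinarith [hypp_lb x hx, hl_nonneg (x, yp x)]
  have keyB : ∀ x ∈ Ioi M, |D x| * l (g x, 1) ≤ 2 * l (x, yp x) := fun x hx => by
    rw [keyh x hx]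
    nlinarith [hypp_ub x hx, hl_nonneg (x, yp x)]
  -- image of Ioi M under g
  have himg : g '' Ioi M = Ioi c := by
    ext u
    constructor
    · rintro ⟨x, hx, rfl⟩
      have : M ^ p - 1 < x ^ p - 1 := by have := hxp x hx; linarith
      exact Real.rpow_lt_rpow (by linarith) this (by positivity)
    · intro hu
      have hc0 : (0:ℝ) < c := Real.rpow_pos_of_pos (by linarith) _
      have hu0 : (0:ℝ) < u := hc0.trans hu
      refine ⟨(u ^ p + 1) ^ (1/p), ?_, ?_⟩
      · have hxp' : ((u ^ p + 1) ^ (1/p)) ^ p = u ^ p + 1 := by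
          rw [one_div]; exact Real.rpow_inv_rpow (by positivity) hp0'
        have hcp : c ^ p = M ^ p - 1 := by
          rw [hc, one_div]; exact Real.rpow_inv_rpow (by linarith) hp0'
        have hucp : c ^ p < u ^ p := Real.rpow_lt_rpow hc0.le hu hp0
        by_contra hle
        simp only [mem_Ioi, not_lt] at hle
        have : ((u ^ p + 1) ^ (1/p)) ^ p ≤ M ^ p :=
          Real.rpow_le_rpow (by positivity) hle hp0.le
        rw [hxp'] at this
        linarith
      · show ((((u ^ p + 1) ^ (1/p)) : ℝ) ^ p - 1) ^ (1/p) = u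
        rw [one_div, Real.rpow_inv_rpow (by positivity) hp0', add_sub_cancel_right,
          Real.rpow_rpow_inv hu0.le hp0']
  -- derivative
  have hderiv : ∀ x ∈ Ioi M, HasDerivWithinAt g (D x) (Ioi M) x := by
    intro x hx
    have h1 : HasDerivAt (fun x : ℝ => x ^ p - 1) (p * x ^ (p-1)) x :=
      (Real.hasDerivAt_rpow_const (Or.inl (hx0 x hx).ne')).sub_const 1
    have h2 := h1.rpow_const (p := 1/p) (Or.inl (ht0 x hx).ne')
    have : (p * x ^ (p-1)) * (1/p) * (x ^ p - 1) ^ (1/p - 1) = D x := by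
      rw [hDdef]; ring
    rw [this] at h2
    exact h2.hasDerivWithinAt
  -- injectivity
  have hinj : InjOn g (Ioi M) := by
    apply StrictMonoOn.injOn
    intro x hx y hy hxy
    have h1 : x ^ p - 1 < y ^ p - 1 := by
      have := Real.rpow_lt_rpow (hx0 x hx).le hxy hp0; linarith
    exact Real.rpow_lt_rpow (ht0 x hx).le h1 (by positivity)
  -- continuity / measurability
  have hcontg : ContinuousOn g (Ioi M) := by
    apply ContinuousOn.rpow_const
    · exact (continuousOn_id.rpow_const fun x hx => Or.inl (hx0 x hx).ne').sub
        continuousOn_const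
    · exact fun x hx => Or.inl (ht0 x hx).ne'
  have hcontD : ContinuousOn D (Ioi M) := by
    apply ContinuousOn.mul
    · exact continuousOn_const.mul
        (continuousOn_id.rpow_const fun x hx => Or.inl (hx0 x hx).ne')
    · exact continuousOn_const.mul
        (((continuousOn_id.rpow_const fun x hx => Or.inl (hx0 x hx).ne').sub
          continuousOn_const).rpow_const fun x hx => Or.inl (ht0 x hx).ne')
  have hcontl1 : ContinuousOn (fun x => l (g x, 1)) (Ioi M) :=
    hl_cont.comp (ContinuousOn.prodMk hcontg continuousOn_const)
      (fun x hx => mk_mem_prod (mem_Ioi.2 (hg0 x hx)) (mem_Ioi.2 one_pos))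
  have hcontyp : ContinuousOn (fun x => l (x, yp x)) (Ioi M) := by
    have hy : ContinuousOn yp (Ioi M) := by
      have h0 : ContinuousOn (fun x : ℝ => (1 + 1 / (x ^ p - 1)) ^ (1/p)) (Ioi M) := by
        apply ContinuousOn.rpow_const
        · exact continuousOn_const.add (continuousOn_const.div
            ((continuousOn_id.rpow_const fun x hx => Or.inl (hx0 x hx).ne').sub
              continuousOn_const) fun x hx => (ht0 x hx).ne')
        · exact fun x hx => Or.inr (by positivity)
      exact h0.congr fun x hx => hyp x (hM1.trans hx)
    exact hl_cont.comp (ContinuousOn.prodMk continuousOn_id hy)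
      (fun x hx => mk_mem_prod (mem_Ioi.2 (hx0 x hx)) (mem_Ioi.2 (hy0 x hx)))
  have hmeas_h : AEStronglyMeasurable (fun x => |D x| * l (g x, 1))
      (volume.restrict (Ioi M)) :=
    (hcontD.abs.mul hcontl1).aestronglyMeasurable measurableSet_Ioi
  -- change of variables
  have himage_int : ∫ u in Ioi c, l (u, 1) = ∫ x in Ioi M, |D x| * l (g x, 1) := by
    rw [← himg, integral_image_eq_integral_abs_deriv_smul measurableSet_Ioi hderiv hinj]
    simp_rw [smul_eq_mul]
  by_cases hInt : IntegrableOn (fun x => |D x| * l (g x, 1)) (Ioi M)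
  · rw [himage_int]
    exact integral_mono_of_nonneg (ae_of_all _ fun x => hl_nonneg _) hInt
      ((ae_restrict_iff' measurableSet_Ioi).2 (ae_of_all _ fun x hx => keyA x hx))
  · have hInt2 : ¬ IntegrableOn (fun x => l (x, yp x)) (Ioi M) := by
      intro h
      apply hInt
      refine Integrable.mono' (h.const_mul 2) hmeas_h ?_
      refine (ae_restrict_iff' measurableSet_Ioi).2 (ae_of_all _ fun x hx => ?_)
      rw [Real.norm_eq_abs, abs_of_nonneg (mul_nonneg (abs_nonneg _) (hl_nonneg _))]
      exact keyB x hx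
    rw [integral_undef hInt2, himage_int, integral_undef hInt]
end

section
/- Fix p ∈ [1,∞) and θ ∈ [π/4, π/2). Define, for φ ∈ (0, π/2), C_{p,φ} = {(x,y) ∈ [0,∞)² : y ≤ min(x tan φ, y_p(x))} where y_p(x) = +∞ for x ≤ 1 and y_p(x) = (1 + 1/(xᵖ − 1))^{1/p} for x > 1, and let S(x,y)=(y,x). Then the symmetric difference of C_{p,θ} and C_{p,π/4} ∪ (S(C_{p,π/4}) ∖ S(C_{p,π/2−θ})) is a Lebesgue-null subset of ℝ². -/
open Real MeasureTheory Set

lemma key_ineq (p x y : ℝ) (hp : 1 ≤ p) (hx : 1 < x) (hy : 1 < y) :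
    y ≤ (1 + 1 / (x ^ p - 1)) ^ (1 / p) ↔ x ^ p * y ^ p ≤ x ^ p + y ^ p := by
  have hp0 : 0 < p := lt_of_lt_of_le one_pos hp
  have hxp : 1 < x ^ p := (Real.one_lt_rpow_iff_of_pos (by linarith)).2 (Or.inl ⟨hx, hp0⟩)
  have hyp1 : 1 < y ^ p := (Real.one_lt_rpow_iff_of_pos (by linarith)).2 (Or.inl ⟨hy, hp0⟩)
  have h1 : (0:ℝ) < x ^ p - 1 := by linarith
  have hc : (0:ℝ) ≤ 1 + 1 / (x ^ p - 1) := by positivity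
  rw [one_div p, Real.le_rpow_inv_iff_of_pos (by linarith) hc hp0]
  have heq : 1 + 1 / (x ^ p - 1) = x ^ p / (x ^ p - 1) := by field_simp; ring
  rw [heq, le_div_iff₀ h1]
  constructor <;> intro h <;> nlinarith

lemma line_null (t : ℝ) : volume {z : ℝ × ℝ | z.2 = z.1 * t} = 0 := by
  set f : (ℝ × ℝ) →ₗ[ℝ] ℝ := LinearMap.snd ℝ ℝ ℝ - t • LinearMap.fst ℝ ℝ ℝ with hf
  have hker : (LinearMap.ker f : Set (ℝ × ℝ)) = {z : ℝ × ℝ | z.2 = z.1 * t} := by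
    ext z
    simp [hf, LinearMap.mem_ker, sub_eq_zero, mul_comm]
  have hne : LinearMap.ker f ≠ ⊤ := by
    intro h
    have : f (0, 1) = 0 := by
      have : (0, 1) ∈ LinearMap.ker f := by rw [h]; trivial
      exact this
    simp [hf] at this
  rw [← hker]
  exact Measure.addHaar_submodule volume _ hne

/-- Up to a Lebesgue-null set, `C_{p,θ} = C_{p,π/4} ∪ (S(C_{p,π/4}) ∖ S(C_{p,π/2−θ}))`
for `θ ∈ [π/4, π/2)`, where `S` is the coordinate swap. -/
theorem stmt11 (p θ : ℝ) (hp : 1 ≤ p) (hθ : θ ∈ Ico (π / 4) (π / 2))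
    (yp : ℝ → ℝ)
    (hyp : ∀ x : ℝ, 1 < x → yp x = (1 + 1 / (x ^ p - 1)) ^ (1 / p))
    (C : ℝ → Set (ℝ × ℝ))
    (hC : ∀ φ ∈ Ioo (0:ℝ) (π / 2), C φ =
      {z : ℝ × ℝ | 0 ≤ z.1 ∧ 0 ≤ z.2 ∧ z.2 ≤ z.1 * tan φ ∧ (1 < z.1 → z.2 ≤ yp z.1)}) :
    volume (symmDiff (C θ)
        (C (π / 4) ∪
          ((fun z : ℝ × ℝ => (z.2, z.1)) '' C (π / 4) \
            (fun z : ℝ × ℝ => (z.2, z.1)) '' C (π / 2 - θ)))) = 0 := by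
  obtain ⟨hθ1, hθ2⟩ := hθ
  have hπ : (0:ℝ) < π := Real.pi_pos
  have hθpos : 0 < θ := lt_of_lt_of_le (by positivity) hθ1
  have h4 : π / 4 ∈ Ioo (0:ℝ) (π/2) := ⟨by positivity, by linarith⟩
  have hθm : θ ∈ Ioo (0:ℝ) (π/2) := ⟨hθpos, hθ2⟩
  have hcm : π / 2 - θ ∈ Ioo (0:ℝ) (π/2) := ⟨by linarith, by linarith⟩
  have htan1 : Real.tan (π/4) = 1 := Real.tan_pi_div_four
  have htanθ : 1 ≤ Real.tan θ := by
    rw [← htan1]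
    exact Real.strictMonoOn_tan.monotoneOn ⟨by linarith, by linarith⟩
      ⟨by linarith, hθ2⟩ hθ1
  have htanθpos : 0 < Real.tan θ := lt_of_lt_of_le one_pos htanθ
  have htanc : Real.tan (π/2 - θ) = (Real.tan θ)⁻¹ := Real.tan_pi_div_two_sub θ
  -- symmetry of the curve
  have hyp_ge1 : ∀ y : ℝ, 1 < y → (1:ℝ) ≤ yp y := by
    intro y hy
    have hp0 : 0 < p := lt_of_lt_of_le one_pos hp
    have hyp1 : 1 < y ^ p := (Real.one_lt_rpow_iff_of_pos (by linarith)).2 (Or.inl ⟨hy, hp0⟩)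
    rw [hyp y hy]
    apply Real.one_le_rpow
    · have h0 : 0 < 1 / (y ^ p - 1) := one_div_pos.2 (by linarith)
      linarith
    · exact (one_div_pos.2 hp0).le
  have symm : ∀ x y : ℝ, 1 < x → 1 < y → (y ≤ yp x ↔ x ≤ yp y) := by
    intro x y hx hy
    rw [hyp x hx, hyp y hy, key_ineq p x y hp hx hy, key_ineq p y x hp hy hx]
    constructor <;> intro h <;> nlinarith [mul_comm (x ^ p) (y ^ p)]
  -- membership characterizations
  have memC : ∀ φ ∈ Ioo (0:ℝ) (π/2), ∀ z : ℝ × ℝ,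
      (z ∈ C φ ↔ 0 ≤ z.1 ∧ 0 ≤ z.2 ∧ z.2 ≤ z.1 * Real.tan φ ∧ (1 < z.1 → z.2 ≤ yp z.1)) := by
    intro φ hφ z
    rw [hC φ hφ]
    rfl
  have memS : ∀ φ ∈ Ioo (0:ℝ) (π/2), ∀ z : ℝ × ℝ,
      (z ∈ (fun z : ℝ × ℝ => (z.2, z.1)) '' C φ ↔
        0 ≤ z.2 ∧ 0 ≤ z.1 ∧ z.1 ≤ z.2 * Real.tan φ ∧ (1 < z.2 → z.1 ≤ yp z.2)) := by
    intro φ hφ z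
    constructor
    · rintro ⟨w, hw, rfl⟩
      rw [memC φ hφ] at hw
      exact hw
    · intro h
      exact ⟨(z.2, z.1), (memC φ hφ (z.2, z.1)).2 h, rfl⟩
  -- the union is contained in C θ
  have hsub : C (π / 4) ∪
      ((fun z : ℝ × ℝ => (z.2, z.1)) '' C (π / 4) \
        (fun z : ℝ × ℝ => (z.2, z.1)) '' C (π / 2 - θ)) ⊆ C θ := by
    intro z hz
    rw [memC θ hθm]
    rcases hz with hz | ⟨hz1, hz2⟩
    · rw [memC (π/4) h4] at hz
      obtain ⟨hx0, hy0, hxy, hcurve⟩ := hz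
      rw [htan1, mul_one] at hxy
      exact ⟨hx0, hy0, hxy.trans (le_mul_of_one_le_right hx0 htanθ), hcurve⟩
    · rw [memS (π/4) h4] at hz1
      rw [memS (π/2 - θ) hcm] at hz2
      obtain ⟨hy0, hx0, hxy, hcurve⟩ := hz1
      rw [htan1, mul_one] at hxy
      push_neg at hz2
      have h5 := hz2 hy0 hx0
      have hlt : z.2 ≤ z.1 * Real.tan θ := by
        by_contra hcon
        push_neg at hcon
        have hle : z.1 ≤ z.2 * Real.tan (π/2 - θ) := by
          rw [htanc]
          have h6 := mul_le_mul_of_nonneg_right hcon.le (inv_nonneg.2 htanθpos.le)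
          rwa [mul_assoc, mul_inv_cancel₀ htanθpos.ne', mul_one] at h6
        obtain ⟨hy1, hcc⟩ := h5 hle
        exact absurd (hcurve hy1) (not_le.2 hcc)
      refine ⟨hx0, hy0, hlt, ?_⟩
      intro hx1
      have hy1 : 1 < z.2 := lt_of_lt_of_le hx1 hxy
      exact (symm z.1 z.2 hx1 hy1).2 (hcurve hy1)
  -- the difference lies on the line
  have hdiff : symmDiff (C θ)
      (C (π / 4) ∪
        ((fun z : ℝ × ℝ => (z.2, z.1)) '' C (π / 4) \
          (fun z : ℝ × ℝ => (z.2, z.1)) '' C (π / 2 - θ)))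
      ⊆ {z : ℝ × ℝ | z.2 = z.1 * Real.tan θ} := by
    intro z hz
    rw [Set.mem_symmDiff] at hz
    rcases hz with ⟨hzC, hzU⟩ | ⟨hzU, hzC⟩
    · -- z ∈ C θ, z ∉ union
      rw [memC θ hθm] at hzC
      obtain ⟨hx0, hy0, hxy, hcurve⟩ := hzC
      have hnot4 : z ∉ C (π/4) := fun h => hzU (Or.inl h)
      rw [memC (π/4) h4] at hnot4
      push_neg at hnot4
      have hxlty : z.1 < z.2 := by
        by_contra h
        push_neg at h
        obtain ⟨h1, hcc⟩ := hnot4 hx0 hy0 (by rw [htan1, mul_one]; exact h)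
        exact absurd (hcurve h1) (not_le.2 hcc)
      -- show z ∈ img C(π/4)
      have him4 : z ∈ (fun z : ℝ × ℝ => (z.2, z.1)) '' C (π/4) := by
        rw [memS (π/4) h4]
        refine ⟨hy0, hx0, by rw [htan1, mul_one]; exact hxlty.le, ?_⟩
        intro hy1
        rcases le_or_gt z.1 1 with h1 | h1
        · exact h1.trans (hyp_ge1 z.2 hy1)
        · exact (symm z.1 z.2 h1 hy1).1 (hcurve h1)
      have himc : z ∈ (fun z : ℝ × ℝ => (z.2, z.1)) '' C (π/2 - θ) := by
        by_contra h
        exact hzU (Or.inr ⟨him4, h⟩)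
      rw [memS (π/2 - θ) hcm] at himc
      obtain ⟨_, _, hle, _⟩ := himc
      rw [htanc] at hle
      have : z.1 * Real.tan θ ≤ z.2 := by
        have := mul_le_mul_of_nonneg_right hle (le_of_lt htanθpos)
        rwa [mul_assoc, inv_mul_cancel₀ (ne_of_gt htanθpos), mul_one] at this
      exact le_antisymm hxy this
    · exact absurd (hsub hzU) hzC
  exact measure_mono_null hdiff (line_null (Real.tan θ))
end
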